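/- Let Q, g : Fin m → ℝ with Q(k) ≥ 0 for all k, and define Q'(k) = max(-g(k), Q(k) + g(k)). Then (1/2)‖Q'‖² - (1/2)‖Q‖² ≤ ⟨Q, g⟩ + ‖g‖², where ‖·‖ is the Euclidean norm and ⟨·,·⟩ the Euclidean inner product. -/
import Mathlib


open scoped RealInnerProductSpace

theorem vector_drift_bound (m : ℕ) (Q Q' g : EuclideanSpace ℝ (Fin m))
    (hQ : ∀ k, 0 ≤ Q k)
    (hQ' : ∀ k, Q' k = max (-(g k)) (Q k + g k)) :
    (1 / 2) * ‖Q'‖ ^ 2 - (1 / 2) * ‖Q‖ ^ 2 ≤ ⟪Q, g⟫ + ‖g‖ ^ 2 := by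
  have hn : ∀ x : EuclideanSpace ℝ (Fin m), ‖x‖ ^ 2 = ∑ k, x k ^ 2 := by
    intro x
    rw [EuclideanSpace.norm_eq, Real.sq_sqrt (by positivity)]
    simp [sq_abs]
  have hi : ⟪Q, g⟫ = ∑ k, Q k * g k := by
    simp [PiLp.inner_apply, RCLike.inner_apply, mul_comm]
  rw [hn, hn, hn, hi, Finset.mul_sum, Finset.mul_sum, ← Finset.sum_sub_distrib,
    ← Finset.sum_add_distrib]
  apply Finset.sum_le_sum
  intro k _
  rw [hQ' k]
  rcases max_cases (-(g k)) (Q k + g k) with ⟨h, _⟩ | ⟨h, _⟩ <;> rw [h] <;> nlinarith [sq_nonneg (Q k + g k), sq_nonneg (g k)]
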